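/- arXiv:1610.03587 — 2 statements merged into one kernel-verified Lean document; each statement's English description precedes it below -/
import Mathlib

section
/- Suppose s | g and {B₀,…,B_{M−1}} is a (g, {K₀,…,K_{M−1}}, 1)-BNCDP of size u, with B_j = {B₀^j,…,B_{u−1}^j}, such that for each j the set of all elements of the base blocks of B_j is a complete system of representatives for the cosets of sZ_g in Z_g. Let q be a prime power with q ≥ max_{0≤k<u} Σ_{j=0}^{M−1} |B_k^j| and gcd(q−1, g/s) = 1. Then there exist sets K₀′,…,K_{M−1}′ with K_j′ ⊆ K_j ∪ {k−1 : k ∈ K_j} and a (g(q−1), {K₀′,…,K_{M−1}′}, 1)-BNCDP of size uq, say {B₀′,…,B_{M−1}′}, such that for each j the set of all elements of the base blocks of B_j′ is a complete system of representatives for the cosets of s(q−1)Z_{g(q−1)} in Z_{g(q−1)}. -/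
open scoped Classical

/-- The multiset of all elements of the base blocks of a family `B`. -/
def blockElems {n u : ℕ} (B : Fin u → Finset (ZMod n)) : Multiset (ZMod n) :=
  ∑ i : Fin u, (B i).val

/-- The multiset of internal differences `Δ(B)`. -/
def deltaList {n u : ℕ} (B : Fin u → Finset (ZMod n)) : Multiset (ZMod n) :=
  ∑ i : Fin u, (((B i) ×ˢ (B i)).filter (fun p => p.1 ≠ p.2)).val.map (fun p => p.1 - p.2)

/-- The multiset of external differences `Δ_E(B, B')`. -/
def deltaE {n u : ℕ} (B B' : Fin u → Finset (ZMod n)) : Multiset (ZMod n) :=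
  ∑ i : Fin u, ((B i) ×ˢ (B' i)).val.map (fun p => p.2 - p.1)

/-- `x` is a multiple of `d` in `ZMod n`, i.e. `x ∈ d·Z_n`. -/
def inSub (n d : ℕ) (x : ZMod n) : Prop := ∃ y : ZMod n, x = (d : ZMod n) * y

/-- The multiset `T` is a complete system of representatives for the cosets of
`d·Z_n` in `Z_n`: each coset contains exactly one element of `T`
(counted with multiplicity). -/
def IsCSR (n d : ℕ) (T : Multiset (ZMod n)) : Prop :=
  ∀ x : ZMod n, Multiset.card (T.filter (fun t => inSub n d (x - t))) = 1

/-- `B` is an `(n, K, λ)`-CDP. -/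
def IsCDP (n u lam : ℕ) (K : Set ℕ) (B : Fin u → Finset (ZMod n)) : Prop :=
  (∀ i, (B i).card ∈ K) ∧ ∀ x : ZMod n, x ≠ 0 → (deltaList B).count x ≤ lam

/-- `B` is an `(n, {K₀,…,K_{M−1}}, λ)`-BNCDP of size `u`. -/
def IsBNCDP (n M u lam : ℕ) (K : Fin M → Set ℕ)
    (B : Fin M → Fin u → Finset (ZMod n)) : Prop :=
  (∀ j, IsCDP n u lam (K j) (B j)) ∧
  ∀ j j' : Fin M, j ≠ j' → ∀ x : ZMod n, (deltaE (B j) (B j')).count x ≤ lam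

/-- `B` is an `(n, g, K, 1)`-CRDP (relative to the subgroup `H = (n/g)·Z_n` of order `g`). -/
def IsCRDP (n g u : ℕ) (K : Set ℕ) (B : Fin u → Finset (ZMod n)) : Prop :=
  (∀ i, (B i).card ∈ K) ∧
  (∀ x : ZMod n, inSub n (n / g) x → (deltaList B).count x = 0) ∧
  (∀ x : ZMod n, (deltaList B).count x ≤ 1)

/-- `B` is an `(n, g, {K₀,…,K_{M−1}}, 1)`-BNCRDP of size `u`. -/
def IsBNCRDP (n g M u : ℕ) (K : Fin M → Set ℕ)
    (B : Fin M → Fin u → Finset (ZMod n)) : Prop :=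
  (∀ j, IsCRDP n g u (K j) (B j)) ∧
  ∀ j j' : Fin M, j ≠ j' →
    (∀ x : ZMod n, inSub n (n / g) x → (deltaE (B j) (B j')).count x = 0) ∧
    (∀ x : ZMod n, (deltaE (B j) (B j')).count x ≤ 1)

lemma count_sum_map {α β : Type*} [DecidableEq α] {v : ℕ} (s : Fin v → Finset β)
    (f : Fin v → β → α) (x : α) :
    Multiset.count x (∑ i : Fin v, (s i).val.map (f i)) =
      (Finset.univ.sigma (fun i => (s i).filter (fun b => f i b = x))).card := by
  rw [Multiset.count_sum', Finset.card_sigma]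
  refine Finset.sum_congr rfl fun i _ => ?_
  rw [Multiset.count_map]
  rw [show ((s i).filter (fun b => f i b = x)).card
      = Multiset.card (((s i).val).filter (fun b => f i b = x)) from rfl]
  congr 1
  exact Multiset.filter_congr (fun b _ => eq_comm)

lemma card_eq_sum_counts {α : Type*} [DecidableEq α] [Fintype α] (T : Multiset α) :
    Multiset.card T = ∑ c : α, Multiset.count c T := by
  calc Multiset.card T = ∑ a ∈ T.toFinset, Multiset.count a T :=
        (Multiset.toFinset_sum_count_eq T).symm
    _ = ∑ c : α, Multiset.count c T := by
        refine Finset.sum_subset (Finset.subset_univ _) ?_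
        intro x _ hx
        rw [Multiset.count_eq_zero]
        simpa using hx

lemma count_eq_one_of_all {α : Type*} [DecidableEq α] [Fintype α] (T : Multiset α)
    (h1 : ∀ c, Multiset.count c T ≤ 1) (h2 : Multiset.card T = Fintype.card α) :
    ∀ c, Multiset.count c T = 1 := by
  have hn : T.Nodup := Multiset.nodup_iff_count_le_one.2 h1
  have huniv : T.toFinset = Finset.univ :=
    Finset.eq_univ_of_card _ (by rw [Multiset.toFinset_card_of_nodup hn, h2])
  intro c
  exact Multiset.count_eq_one_of_mem hn (by
    have : c ∈ T.toFinset := huniv ▸ Finset.mem_univ c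
    simpa using this)

def inSub' (n d : ℕ) (x : ZMod n) : Prop := ∃ y : ZMod n, x = (d : ZMod n) * y

/-- reduction map `ZMod n → ZMod d` (canonical when `d ∣ n`). -/
def resid (n d : ℕ) (x : ZMod n) : ZMod d := (x.val : ZMod d)

lemma cast_mod_of_dvd {d n : ℕ} (h : d ∣ n) (m : ℕ) :
    ((m % n : ℕ) : ZMod d) = (m : ZMod d) := by
  rw [ZMod.natCast_eq_natCast_iff]
  exact Nat.mod_mod_of_dvd m h

lemma val_cast_self {n : ℕ} [NeZero n] (a : ZMod n) : ((a.val : ℕ) : ZMod n) = a :=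
  ZMod.natCast_rightInverse a

lemma resid_natCast {n d : ℕ} (h : d ∣ n) (m : ℕ) :
    resid n d ((m : ℕ) : ZMod n) = (m : ZMod d) := by
  unfold resid
  rw [ZMod.val_natCast, cast_mod_of_dvd h]

lemma resid_add {n d : ℕ} [NeZero n] (h : d ∣ n) (a b : ZMod n) :
    resid n d (a + b) = resid n d a + resid n d b := by
  unfold resid
  rw [ZMod.val_add, cast_mod_of_dvd h, Nat.cast_add]

lemma resid_sub {n d : ℕ} [NeZero n] (h : d ∣ n) (a b : ZMod n) :
    resid n d (a - b) = resid n d a - resid n d b := by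
  have h1 := resid_add h (a - b) b
  rw [sub_add_cancel] at h1
  exact eq_sub_of_add_eq h1.symm

lemma inSub'_iff_resid {n d : ℕ} [NeZero n] [NeZero d] (h : d ∣ n) (z : ZMod n) :
    inSub' n d z ↔ resid n d z = 0 := by
  constructor
  · rintro ⟨y, rfl⟩
    have : (d : ZMod n) * y = ((d * y.val : ℕ) : ZMod n) := by
      rw [Nat.cast_mul, val_cast_self]
    rw [this, resid_natCast h]
    push_cast
    simp [ZMod.natCast_self]
  · intro hz
    have hd : d ∣ z.val := by
      have := hz
      unfold resid at this
      exact (ZMod.natCast_eq_zero_iff _ _).1 this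
    refine ⟨((z.val / d : ℕ) : ZMod n), ?_⟩
    have h2 : ((d * (z.val / d) : ℕ) : ZMod n) = (d : ZMod n) * ((z.val / d : ℕ) : ZMod n) := by
      push_cast; ring
    rw [← h2, Nat.mul_div_cancel' hd, val_cast_self]

lemma inSub'_sub_iff {n d : ℕ} [NeZero n] [NeZero d] (h : d ∣ n) (x t : ZMod n) :
    inSub' n d (x - t) ↔ resid n d t = resid n d x := by
  rw [inSub'_iff_resid h, resid_sub h, sub_eq_zero, eq_comm]

def psiMap (g q' : ℕ) (b : ZMod g) (m : ZMod q') : ZMod (g * q') :=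
  ((b.val + g * m.val : ℕ) : ZMod (g * q'))

lemma psi_nat_lt {g q' : ℕ} [NeZero g] [NeZero q'] (b : ZMod g) (m : ZMod q') :
    b.val + g * m.val < g * q' := by
  have h1 := ZMod.val_lt b
  have h2 := ZMod.val_lt m
  calc b.val + g * m.val < g + g * m.val := by omega
    _ = g * (m.val + 1) := by ring
    _ ≤ g * q' := Nat.mul_le_mul_left g (by omega)

lemma psi_injective {g q' : ℕ} [NeZero g] [NeZero q'] {b b' : ZMod g} {m m' : ZMod q'}
    (h : psiMap g q' b m = psiMap g q' b' m') : b = b' ∧ m = m' := by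
  haveI : NeZero (g * q') := ⟨Nat.mul_ne_zero (NeZero.ne g) (NeZero.ne q')⟩
  unfold psiMap at h
  have hnat : b.val + g * m.val = b'.val + g * m'.val := by
    have e1 := ZMod.val_cast_of_lt (psi_nat_lt b m)
    have e2 := ZMod.val_cast_of_lt (psi_nat_lt b' m')
    rw [← e1, ← e2, h]
  have hb : b.val = b'.val := by
    have := congrArg (· % g) hnat
    simpa [Nat.add_mul_mod_self_left, Nat.mod_eq_of_lt (ZMod.val_lt b),
      Nat.mod_eq_of_lt (ZMod.val_lt b')] using this
  have hm : m.val = m'.val := by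
    have : g * m.val = g * m'.val := by omega
    exact Nat.eq_of_mul_eq_mul_left (Nat.pos_of_ne_zero (NeZero.ne g)) this
  exact ⟨ZMod.val_injective g hb, ZMod.val_injective q' hm⟩

lemma resid_psi_g {g q' : ℕ} [NeZero g] [NeZero q'] (b : ZMod g) (m : ZMod q') :
    resid (g * q') g (psiMap g q' b m) = b := by
  unfold psiMap
  rw [resid_natCast (Dvd.intro q' rfl)]
  push_cast
  simp [ZMod.natCast_self, val_cast_self]

lemma resid_s_psi {g q' s : ℕ} [NeZero g] [NeZero q'] [NeZero s] (hsg : s ∣ g)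
    {b b' : ZMod g} {m m' : ZMod q'}
    (h : resid (g * q') (s * q') (psiMap g q' b m) = resid (g * q') (s * q') (psiMap g q' b' m')) :
    resid g s b = resid g s b' := by
  have hdvd : s * q' ∣ g * q' := mul_dvd_mul_right hsg q'
  unfold psiMap at h
  rw [resid_natCast hdvd, resid_natCast hdvd] at h
  have hmod : (b.val + g * m.val) ≡ (b'.val + g * m'.val) [MOD s * q'] :=
    (ZMod.natCast_eq_natCast_iff _ _ _).1 h
  have hmods : (b.val + g * m.val) ≡ (b'.val + g * m'.val) [MOD s] :=
    hmod.of_dvd (Dvd.intro q' rfl)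
  obtain ⟨e, he⟩ := hsg
  have h1 : b.val + g * m.val ≡ b.val + 0 [MOD s] := by
    refine Nat.ModEq.add_left _ ?_
    rw [he]
    exact (Nat.modEq_zero_iff_dvd).2 ⟨e * m.val, by ring⟩
  have h2 : b'.val + g * m'.val ≡ b'.val + 0 [MOD s] := by
    refine Nat.ModEq.add_left _ ?_
    rw [he]
    exact (Nat.modEq_zero_iff_dvd).2 ⟨e * m'.val, by ring⟩
  have : b.val ≡ b'.val [MOD s] := by
    have := (h1.symm.trans hmods).trans h2
    simpa using this
  unfold resid
  exact (ZMod.natCast_eq_natCast_iff _ _ _).2 this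

lemma m_eq_of_resid {g q' s : ℕ} [NeZero g] [NeZero q'] [NeZero s] (hsg : s ∣ g)
    (hgcd : Nat.gcd q' (g / s) = 1) {b : ZMod g} {m m' : ZMod q'}
    (h : resid (g * q') (s * q') (psiMap g q' b m) = resid (g * q') (s * q') (psiMap g q' b m')) :
    m = m' := by
  have hdvd : s * q' ∣ g * q' := mul_dvd_mul_right hsg q'
  unfold psiMap at h
  rw [resid_natCast hdvd, resid_natCast hdvd] at h
  have hmod : (b.val + g * m.val) ≡ (b.val + g * m'.val) [MOD s * q'] :=
    (ZMod.natCast_eq_natCast_iff _ _ _).1 h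
  have hmod2 : g * m.val ≡ g * m'.val [MOD s * q'] := Nat.ModEq.add_left_cancel' _ hmod
  obtain ⟨e, he⟩ := hsg
  have hepos : e = g / s := by rw [he, Nat.mul_div_cancel_left e (Nat.pos_of_ne_zero (NeZero.ne s))]
  have hmod3 : s * (e * m.val) ≡ s * (e * m'.val) [MOD s * q'] := by
    rw [← mul_assoc, ← mul_assoc, ← he]; exact hmod2
  have hmod4 : e * m.val ≡ e * m'.val [MOD q'] :=
    Nat.ModEq.mul_left_cancel' (NeZero.ne s) hmod3
  have hmod5 : m.val ≡ m'.val [MOD q'] := by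
    refine Nat.ModEq.cancel_left_of_coprime ?_ hmod4
    rw [← hepos] at hgcd
    exact hgcd
  exact ZMod.val_injective q' (hmod5.eq_of_lt_of_lt (ZMod.val_lt m) (ZMod.val_lt m'))

lemma psi_diff_eq {g q' : ℕ} [NeZero g] [NeZero q'] {b b' : ZMod g} {m1 m1' m2 m2' : ZMod q'}
    (h : psiMap g q' b m1 - psiMap g q' b' m1' = psiMap g q' b m2 - psiMap g q' b' m2') :
    m1 + m2' = m2 + m1' := by
  haveI : NeZero (g * q') := ⟨Nat.mul_ne_zero (NeZero.ne g) (NeZero.ne q')⟩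
  rw [sub_eq_sub_iff_add_eq_add] at h
  unfold psiMap at h
  have hmod : ((b.val + g * m1.val) + (b'.val + g * m2'.val))
      ≡ ((b.val + g * m2.val) + (b'.val + g * m1'.val)) [MOD g * q'] := by
    rw [← ZMod.natCast_eq_natCast_iff]
    push_cast
    push_cast at h
    linear_combination h
  have hmod2 : (b.val + b'.val) + g * (m1.val + m2'.val)
      ≡ (b.val + b'.val) + g * (m2.val + m1'.val) [MOD g * q'] := by
    have e1 : (b.val + b'.val) + g * (m1.val + m2'.val)
        = (b.val + g * m1.val) + (b'.val + g * m2'.val) := by ring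
    have e2 : (b.val + b'.val) + g * (m2.val + m1'.val)
        = (b.val + g * m2.val) + (b'.val + g * m1'.val) := by ring
    rw [e1, e2]; exact hmod
  have hmod3 := Nat.ModEq.mul_left_cancel' (NeZero.ne g) (Nat.ModEq.add_left_cancel' _ hmod2)
  have : ((m1.val + m2'.val : ℕ) : ZMod q') = ((m2.val + m1'.val : ℕ) : ZMod q') :=
    (ZMod.natCast_eq_natCast_iff _ _ _).2 hmod3
  push_cast [val_cast_self] at this
  exact this

lemma field_cancel {F : Type*} [Field F] {e1 e2 y1 y2 : F}
    (h : (e1 + y1) * (e2 + y2) = (e1 + y2) * (e2 + y1)) (he : e1 ≠ e2) : y1 = y2 := by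
  have h2 : (e1 - e2) * (y2 - y1) = 0 := by linear_combination h
  rcases mul_eq_zero.1 h2 with h3 | h3
  · exact absurd (sub_eq_zero.1 h3) he
  · exact (sub_eq_zero.1 h3).symm

noncomputable def mlog {q' : ℕ} {F : Type*} [Field F] (lg : Fˣ → ZMod q') (z : F) : ZMod q' :=
  if h : z = 0 then 0 else lg (Units.mk0 z h)

lemma mlog_ne {q' : ℕ} {F : Type*} [Field F] (lg : Fˣ → ZMod q') {z : F} (h : z ≠ 0) :
    mlog lg z = lg (Units.mk0 z h) := by
  unfold mlog
  rw [dif_neg h]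

noncomputable def newBlock (g q' : ℕ) {F : Type*} [Field F] (lg : Fˣ → ZMod q') (e : ZMod g → F)
    (Bk : Finset (ZMod g)) (y : F) : Finset (ZMod (g * q')) :=
  (Bk.filter (fun b => e b + y ≠ 0)).image (fun b => psiMap g q' b (mlog lg (e b + y)))

lemma mem_newBlock {g q' : ℕ} {F : Type*} [Field F] (lg : Fˣ → ZMod q') (e : ZMod g → F)
    (Bk : Finset (ZMod g)) (y : F) (a : ZMod (g * q')) :
    a ∈ newBlock g q' lg e Bk y ↔
      ∃ b, b ∈ Bk ∧ e b + y ≠ 0 ∧ psiMap g q' b (mlog lg (e b + y)) = a := by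
  simp only [newBlock, Finset.mem_image, Finset.mem_filter]
  constructor
  · rintro ⟨b, ⟨hb, hb2⟩, rfl⟩; exact ⟨b, hb, hb2, rfl⟩
  · rintro ⟨b, hb, hb2, rfl⟩; exact ⟨b, ⟨hb, hb2⟩, rfl⟩

lemma newBlock_val {g q' : ℕ} [NeZero g] [NeZero q'] {F : Type*} [Field F]
    (lg : Fˣ → ZMod q') (e : ZMod g → F) (Bk : Finset (ZMod g)) (y : F) :
    (newBlock g q' lg e Bk y).val =
      ((Bk.filter (fun b => e b + y ≠ 0)).val).map
        (fun b => psiMap g q' b (mlog lg (e b + y))) := by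
  unfold newBlock
  rw [Finset.image_val, Multiset.dedup_eq_self.2]
  exact Multiset.Nodup.map_on (fun x _ y _ h => (psi_injective h).1) (Finset.nodup _)

lemma newBlock_card {g q' : ℕ} [NeZero g] [NeZero q'] {F : Type*} [Field F]
    (lg : Fˣ → ZMod q') (e : ZMod g → F) (Bk : Finset (ZMod g)) (y : F) :
    (newBlock g q' lg e Bk y).card = (Bk.filter (fun b => e b + y ≠ 0)).card :=
  Finset.card_image_of_injOn (fun x _ x' _ h => (psi_injective h).1)

lemma csr_count {n d : ℕ} [NeZero n] [NeZero d] (h : d ∣ n) (T : Multiset (ZMod n))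
    (x : ZMod n) :
    Multiset.card (T.filter (fun t => inSub' n d (x - t)))
      = Multiset.count (resid n d x) (T.map (resid n d)) := by
  rw [Multiset.count_map]
  congr 1
  exact Multiset.filter_congr fun t _ => by rw [inSub'_sub_iff h, eq_comm]

lemma exists_field (q : ℕ) (hq : IsPrimePow q) :
    ∃ (F : Type) (_ : Field F) (_ : Fintype F), Fintype.card F = q := by
  obtain ⟨p, n, hp, hn, rfl⟩ := hq
  haveI : Fact p.Prime := ⟨Nat.prime_iff.mpr hp⟩
  haveI : Finite (GaloisField p n) := by
    have hc : Nat.card (GaloisField p n) = p ^ n := GaloisField.card p n hn.ne'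
    refine Nat.finite_of_card_ne_zero ?_
    rw [hc]
    exact pow_ne_zero n hp.ne_zero
  haveI : Fintype (GaloisField p n) := Fintype.ofFinite _
  refine ⟨GaloisField p n, inferInstance, inferInstance, ?_⟩
  rw [← Nat.card_eq_fintype_card, GaloisField.card p n hn.ne']

lemma isCSR_iff' {n d : ℕ} [NeZero n] [NeZero d] (h : d ∣ n) (T : Multiset (ZMod n)) :
    (∀ x : ZMod n, Multiset.card (T.filter (fun t => inSub' n d (x - t))) = 1)
      ↔ ∀ c : ZMod d, Multiset.count c (T.map (resid n d)) = 1 := by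
  constructor
  · intro H c
    have := H ((c.val : ZMod n))
    rwa [csr_count h, resid_natCast h, val_cast_self] at this
  · intro H x
    rw [csr_count h]; exact H _

lemma isCSR_iff {n d : ℕ} [NeZero n] [NeZero d] (h : d ∣ n) (T : Multiset (ZMod n)) :
    IsCSR n d T ↔ ∀ c : ZMod d, Multiset.count c (T.map (resid n d)) = 1 := by
  have he : inSub n d = inSub' n d := rfl
  unfold IsCSR
  rw [he]
  exact isCSR_iff' h T

theorem stmt17 (g s M u q : ℕ) (hg : 0 < g) (hs : 0 < s) (hsg : s ∣ g)
    (K : Fin M → Set ℕ) (B : Fin M → Fin u → Finset (ZMod g))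
    (hB : IsBNCDP g M u 1 K B)
    (hCSR : ∀ j, IsCSR g s (blockElems (B j)))
    (hq : IsPrimePow q)
    (hqt : ∀ k : Fin u, (∑ j : Fin M, (B j k).card) ≤ q)
    (hgcd : Nat.gcd (q - 1) (g / s) = 1) :
    ∃ K' : Fin M → Set ℕ,
      (∀ j, K' j ⊆ K j ∪ (fun k => k - 1) '' K j) ∧
      ∃ B' : Fin M → Fin (u * q) → Finset (ZMod (g * (q - 1))),
        IsBNCDP (g * (q - 1)) M (u * q) 1 K' B' ∧
        ∀ j, IsCSR (g * (q - 1)) (s * (q - 1)) (blockElems (B' j)) := by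
  classical
  have hq2 : 2 ≤ q := hq.two_le
  set q' : ℕ := q - 1 with hq'def
  have hq'pos : 0 < q' := by omega
  haveI : NeZero g := ⟨hg.ne'⟩
  haveI : NeZero q' := ⟨hq'pos.ne'⟩
  haveI : NeZero s := ⟨hs.ne'⟩
  haveI : NeZero (g * q') := ⟨Nat.mul_ne_zero hg.ne' hq'pos.ne'⟩
  haveI : NeZero (s * q') := ⟨Nat.mul_ne_zero hs.ne' hq'pos.ne'⟩
  have hgq : g ∣ g * q' := Dvd.intro q' rfl
  have hsq : s * q' ∣ g * q' := mul_dvd_mul_right hsg q'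
  obtain ⟨F, fF, ftF, hcard⟩ := exists_field q hq
  have hcardU : Fintype.card Fˣ = q' := by rw [Fintype.card_units, hcard]
  obtain ⟨ζ, hζ⟩ := IsCyclic.exists_generator (α := Fˣ)
  have horder : orderOf ζ = q' := by
    rw [orderOf_eq_card_of_forall_mem_zpowers hζ, Nat.card_eq_fintype_card, hcardU]
  set φ : ZMod q' → Fˣ := fun m => ζ ^ m.val with hφdef
  have hφhom : ∀ m m' : ZMod q', φ (m + m') = φ m * φ m' := by
    intro m m'
    show ζ ^ (m + m').val = ζ ^ m.val * ζ ^ m'.val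
    rw [← pow_add, pow_eq_pow_iff_modEq, horder, ZMod.val_add]
    exact Nat.mod_modEq _ _
  have hφinj : Function.Injective φ := by
    intro m m' h
    have h2 := pow_eq_pow_iff_modEq.1 (h : ζ ^ m.val = ζ ^ m'.val)
    rw [horder] at h2
    exact ZMod.val_injective q' (h2.eq_of_lt_of_lt (ZMod.val_lt m) (ZMod.val_lt m'))
  have hφbij : Function.Bijective φ :=
    (Fintype.bijective_iff_injective_and_card φ).2 ⟨hφinj, by rw [ZMod.card, hcardU]⟩
  set lg : Fˣ → ZMod q' := fun t => (Equiv.ofBijective φ hφbij).symm t with hlgdef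
  have hφlg : ∀ t : Fˣ, φ (lg t) = t := fun t => (Equiv.ofBijective φ hφbij).apply_symm_apply t
  have hmlog_val : ∀ z : F, ∀ hz : z ≠ 0, ((φ (mlog lg z) : Fˣ) : F) = z := by
    intro z hz
    rw [mlog_ne lg hz, hφlg]
    rfl
  have hmlog_inj : ∀ z w : F, z ≠ 0 → w ≠ 0 → mlog lg z = mlog lg w → z = w := by
    intro z w hz hw h
    rw [← hmlog_val z hz, ← hmlog_val w hw, h]
  have hprod : ∀ z1 z2 z3 z4 : F, z1 ≠ 0 → z2 ≠ 0 → z3 ≠ 0 → z4 ≠ 0 →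
      mlog lg z1 + mlog lg z2 = mlog lg z3 + mlog lg z4 → z1 * z2 = z3 * z4 := by
    intro z1 z2 z3 z4 h1 h2 h3 h4 h
    have e1 : φ (mlog lg z1 + mlog lg z2) = φ (mlog lg z3 + mlog lg z4) := by rw [h]
    rw [hφhom, hφhom] at e1
    have e2 := congrArg (Units.val) e1
    rw [Units.val_mul, Units.val_mul, hmlog_val _ h1, hmlog_val _ h2,
      hmlog_val _ h3, hmlog_val _ h4] at e2
    exact e2
  have hy_eq : ∀ (e1 e2 y1 y2 : F) (b b' : ZMod g),
      e1 + y1 ≠ 0 → e2 + y1 ≠ 0 → e1 + y2 ≠ 0 → e2 + y2 ≠ 0 → e1 ≠ e2 →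
      psiMap g q' b (mlog lg (e1 + y1)) - psiMap g q' b' (mlog lg (e2 + y1)) =
        psiMap g q' b (mlog lg (e1 + y2)) - psiMap g q' b' (mlog lg (e2 + y2)) →
      y1 = y2 := by
    intro e1 e2 y1 y2 b b' h11 h21 h12 h22 hee heq
    have hm := psi_diff_eq heq
    exact field_cancel (hprod _ _ _ _ h11 h22 h12 h21 hm) hee
  -- the injective labelling of block elements by field elements
  have hembex : ∀ k : Fin u, Nonempty ((Σ j : Fin M, {b // b ∈ B j k}) ↪ F) := by
    intro k
    apply Function.Embedding.nonempty_of_card_le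
    rw [hcard, Fintype.card_sigma]
    simpa [Fintype.card_coe] using hqt k
  set emb : ∀ k : Fin u, ((Σ j : Fin M, {b // b ∈ B j k}) ↪ F) :=
    fun k => Classical.choice (hembex k) with hembdef
  set e : Fin M → Fin u → ZMod g → F :=
    fun j k b => if h : b ∈ B j k then emb k ⟨j, ⟨b, h⟩⟩ else 0 with hedef
  have he_inj : ∀ (k : Fin u) (j j' : Fin M) (b b' : ZMod g), b ∈ B j k → b' ∈ B j' k →
      e j k b = e j' k b' → j = j' ∧ b = b' := by
    intro k j j' b b' hb hb' hE
    simp only [hedef, dif_pos hb, dif_pos hb'] at hE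
    have h2 := (emb k).injective hE
    have hj : j = j' := congrArg Sigma.fst h2
    subst hj
    refine ⟨rfl, ?_⟩
    have h3 : (⟨b, hb⟩ : {b // b ∈ B j k}) = ⟨b', hb'⟩ := by
      simpa using h2
    exact congrArg Subtype.val h3
  -- the index equivalence
  set ι : Fin (u * q) ≃ Fin u × F :=
    finProdFinEquiv.symm.trans ((Equiv.refl (Fin u)).prodCongr
      (Fintype.equivFinOfCardEq hcard).symm) with hιdef
  -- the new blocks
  set B' : Fin M → Fin (u * q) → Finset (ZMod (g * q')) :=
    fun j idx => newBlock g q' lg (e j (ι idx).1) (B j (ι idx).1) (ι idx).2 with hB'def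
  have hmem : ∀ (j : Fin M) (idx : Fin (u * q)) (a : ZMod (g * q')),
      a ∈ B' j idx ↔ ∃ b, b ∈ B j (ι idx).1 ∧ e j (ι idx).1 b + (ι idx).2 ≠ 0 ∧
        psiMap g q' b (mlog lg (e j (ι idx).1 b + (ι idx).2)) = a :=
    fun j idx a => mem_newBlock _ _ _ _ _
  -- uniqueness of representation of an element of a family, modulo s
  have hsrc : ∀ (j : Fin M) (k1 k2 : Fin u) (b1 b2 : ZMod g), b1 ∈ B j k1 → b2 ∈ B j k2 →
      resid g s b1 = resid g s b2 → k1 = k2 ∧ b1 = b2 := by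
    intro j k1 k2 b1 b2 hb1 hb2 hr
    have hcsrj := (isCSR_iff hsg (blockElems (B j))).1 (hCSR j) (resid g s b1)
    have hmapeq : (blockElems (B j)).map (resid g s)
        = ∑ i : Fin u, ((B j i).val).map (resid g s) := by
      unfold blockElems
      exact map_sum (Multiset.mapAddMonoidHom _) _ _
    rw [hmapeq, count_sum_map (fun i => B j i) (fun _ b => resid g s b)] at hcsrj
    have h2 := Finset.card_le_one.1 (le_of_eq hcsrj) ⟨k1, b1⟩
      (by simp [Finset.mem_sigma, Finset.mem_filter, hb1]) ⟨k2, b2⟩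
      (by simp [Finset.mem_sigma, Finset.mem_filter, hb2, hr.symm])
    have hk : k1 = k2 := congrArg Sigma.fst h2
    subst hk
    have hbb : b1 = b2 := by simpa using h2
    exact ⟨rfl, hbb⟩
  -- ===== main goals =====
  refine ⟨fun j => K j ∪ (fun k => k - 1) '' K j, fun j => subset_rfl, B', ⟨?_, ?_⟩, ?_⟩
  · -- each family is a CDP
    intro j
    constructor
    · -- block sizes
      intro i
      have hc : (B' j i).card
          = ((B j (ι i).1).filter (fun b => e j (ι i).1 b + (ι i).2 ≠ 0)).card :=
        newBlock_card _ _ _ _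
      have hsplit := Finset.card_filter_add_card_filter_not
        (s := B j (ι i).1) (p := fun b => e j (ι i).1 b + (ι i).2 ≠ 0)
      have hle : ((B j (ι i).1).filter (fun b => ¬ (e j (ι i).1 b + (ι i).2 ≠ 0))).card ≤ 1 := by
        rw [Finset.card_le_one]
        intro a ha b hb
        simp only [Finset.mem_filter, not_not] at ha hb
        have hEab : e j (ι i).1 a = e j (ι i).1 b := by
          have h1 : e j (ι i).1 a = -(ι i).2 := eq_neg_of_add_eq_zero_left ha.2
          have h2 : e j (ι i).1 b = -(ι i).2 := eq_neg_of_add_eq_zero_left hb.2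
          rw [h1, h2]
        exact (he_inj (ι i).1 j j a b ha.1 hb.1 hEab).2
      have hKk := (hB.1 j).1 (ι i).1
      rcases Nat.le_one_iff_eq_zero_or_eq_one.1 hle with h0 | h1
      · left
        have hcc : (B' j i).card = (B j (ι i).1).card := by omega
        rw [hcc]; exact hKk
      · right
        exact ⟨(B j (ι i).1).card, hKk, by simp only []; omega⟩
    · -- internal differences
      intro x hx
      have hDL : Multiset.count x (deltaList (B' j))
          = (Finset.univ.sigma (fun i => (((B' j i) ×ˢ (B' j i)).filter
              (fun p => p.1 ≠ p.2)).filter (fun p => p.1 - p.2 = x))).card :=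
        count_sum_map _ _ x
      rw [hDL, Finset.card_le_one]
      rintro ⟨i1, p1⟩ h1 ⟨i2, p2⟩ h2
      simp only [Finset.mem_sigma, Finset.mem_univ, true_and, Finset.mem_filter,
        Finset.mem_product] at h1 h2
      obtain ⟨⟨⟨hp11, hp12⟩, hne1⟩, hx1⟩ := h1
      obtain ⟨⟨⟨hp21, hp22⟩, hne2⟩, hx2⟩ := h2
      obtain ⟨b1, hb1, hz1, hpsi1⟩ := (hmem j i1 p1.1).1 hp11
      obtain ⟨b1', hb1', hz1', hpsi1'⟩ := (hmem j i1 p1.2).1 hp12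
      obtain ⟨b2, hb2, hz2, hpsi2⟩ := (hmem j i2 p2.1).1 hp21
      obtain ⟨b2', hb2', hz2', hpsi2'⟩ := (hmem j i2 p2.2).1 hp22
      have hbb1 : b1 ≠ b1' := by
        rintro rfl
        exact hne1 (hpsi1.symm.trans hpsi1')
      have hbb2 : b2 ≠ b2' := by
        rintro rfl
        exact hne2 (hpsi2.symm.trans hpsi2')
      have hres1 : resid (g * q') g x = b1 - b1' := by
        rw [← hx1, resid_sub hgq, ← hpsi1, ← hpsi1', resid_psi_g, resid_psi_g]
      have hres2 : resid (g * q') g x = b2 - b2' := by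
        rw [← hx2, resid_sub hgq, ← hpsi2, ← hpsi2', resid_psi_g, resid_psi_g]
      have hδ0 : b1 - b1' ≠ 0 := sub_ne_zero.2 hbb1
      have hcnt := (hB.1 j).2 (b1 - b1') hδ0
      have hDLold : Multiset.count (b1 - b1') (deltaList (B j))
          = (Finset.univ.sigma (fun i => (((B j i) ×ˢ (B j i)).filter
              (fun p => p.1 ≠ p.2)).filter (fun p => p.1 - p.2 = b1 - b1'))).card :=
        count_sum_map _ _ _
      rw [hDLold] at hcnt
      have h12 := Finset.card_le_one.1 hcnt ⟨(ι i1).1, (b1, b1')⟩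
        (by simp only [Finset.mem_sigma, Finset.mem_univ, true_and, Finset.mem_filter,
              Finset.mem_product]
            exact ⟨⟨⟨hb1, hb1'⟩, hbb1⟩, by simp⟩)
        ⟨(ι i2).1, (b2, b2')⟩
        (by simp only [Finset.mem_sigma, Finset.mem_univ, true_and, Finset.mem_filter,
              Finset.mem_product]
            exact ⟨⟨⟨hb2, hb2'⟩, hbb2⟩, hres2.symm.trans hres1⟩)
      have h123 : (ι i1).1 = (ι i2).1 ∧ b1 = b2 ∧ b1' = b2' := by simpa using h12
      obtain ⟨hk, hb12, hb12'⟩ := h123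
      subst hb12; subst hb12'
      rw [← hk] at hpsi2 hpsi2' hz2 hz2'
      have hEne : e j (ι i1).1 b1 ≠ e j (ι i1).1 b1' := by
        intro hE
        exact hbb1 (he_inj (ι i1).1 j j b1 b1' hb1 (hk ▸ hb1') hE).2
      have heq2 : psiMap g q' b1 (mlog lg (e j (ι i1).1 b1 + (ι i1).2))
            - psiMap g q' b1' (mlog lg (e j (ι i1).1 b1' + (ι i1).2))
          = psiMap g q' b1 (mlog lg (e j (ι i1).1 b1 + (ι i2).2))
            - psiMap g q' b1' (mlog lg (e j (ι i1).1 b1' + (ι i2).2)) := by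
        rw [hpsi1, hpsi1', hpsi2, hpsi2', hx1, hx2]
      have hyy := hy_eq _ _ _ _ _ _ hz1 hz1' hz2 hz2' hEne heq2
      have hii : i1 = i2 := ι.injective (Prod.ext hk hyy)
      subst hii
      have hp12eq : p1 = p2 :=
        Prod.ext (hpsi1.symm.trans hpsi2) (hpsi1'.symm.trans hpsi2')
      rw [hp12eq]
  · -- external differences
    intro j j' hjj x
    have hDE : Multiset.count x (deltaE (B' j) (B' j'))
        = (Finset.univ.sigma (fun i => ((B' j i) ×ˢ (B' j' i)).filter
            (fun p => p.2 - p.1 = x))).card :=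
      count_sum_map _ _ x
    rw [hDE, Finset.card_le_one]
    rintro ⟨i1, p1⟩ h1 ⟨i2, p2⟩ h2
    simp only [Finset.mem_sigma, Finset.mem_univ, true_and, Finset.mem_filter,
      Finset.mem_product] at h1 h2
    obtain ⟨⟨hp11, hp12⟩, hx1⟩ := h1
    obtain ⟨⟨hp21, hp22⟩, hx2⟩ := h2
    obtain ⟨b1, hb1, hz1, hpsi1⟩ := (hmem j i1 p1.1).1 hp11
    obtain ⟨c1, hc1, hw1, hpsi1'⟩ := (hmem j' i1 p1.2).1 hp12
    obtain ⟨b2, hb2, hz2, hpsi2⟩ := (hmem j i2 p2.1).1 hp21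
    obtain ⟨c2, hc2, hw2, hpsi2'⟩ := (hmem j' i2 p2.2).1 hp22
    have hres1 : resid (g * q') g x = c1 - b1 := by
      rw [← hx1, resid_sub hgq, ← hpsi1, ← hpsi1', resid_psi_g, resid_psi_g]
    have hres2 : resid (g * q') g x = c2 - b2 := by
      rw [← hx2, resid_sub hgq, ← hpsi2, ← hpsi2', resid_psi_g, resid_psi_g]
    have hcnt := hB.2 j j' hjj (c1 - b1)
    have hDEold : Multiset.count (c1 - b1) (deltaE (B j) (B j'))
        = (Finset.univ.sigma (fun i => ((B j i) ×ˢ (B j' i)).filter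
            (fun p => p.2 - p.1 = c1 - b1))).card :=
      count_sum_map _ _ _
    rw [hDEold] at hcnt
    have h12 := Finset.card_le_one.1 hcnt ⟨(ι i1).1, (b1, c1)⟩
      (by simp only [Finset.mem_sigma, Finset.mem_univ, true_and, Finset.mem_filter,
            Finset.mem_product]
          exact ⟨⟨hb1, hc1⟩, by simp⟩)
      ⟨(ι i2).1, (b2, c2)⟩
      (by simp only [Finset.mem_sigma, Finset.mem_univ, true_and, Finset.mem_filter,
            Finset.mem_product]
          exact ⟨⟨hb2, hc2⟩, hres2.symm.trans hres1⟩)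
    have h123 : (ι i1).1 = (ι i2).1 ∧ b1 = b2 ∧ c1 = c2 := by simpa using h12
    obtain ⟨hk, hb12, hc12⟩ := h123
    subst hb12; subst hc12
    rw [← hk] at hpsi2 hpsi2' hz2 hw2
    have hEne : e j' (ι i1).1 c1 ≠ e j (ι i1).1 b1 := by
      intro hE
      exact hjj (he_inj (ι i1).1 j' j c1 b1 (hk ▸ hc1) hb1 hE).1.symm
    have heq2 : psiMap g q' c1 (mlog lg (e j' (ι i1).1 c1 + (ι i1).2))
          - psiMap g q' b1 (mlog lg (e j (ι i1).1 b1 + (ι i1).2))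
        = psiMap g q' c1 (mlog lg (e j' (ι i1).1 c1 + (ι i2).2))
          - psiMap g q' b1 (mlog lg (e j (ι i1).1 b1 + (ι i2).2)) := by
      rw [hpsi1, hpsi1', hpsi2, hpsi2', hx1, hx2]
    have hyy := hy_eq _ _ _ _ _ _ hw1 hz1 hw2 hz2 hEne heq2
    have hii : i1 = i2 := ι.injective (Prod.ext hk hyy)
    subst hii
    have hp12eq : p1 = p2 :=
      Prod.ext (hpsi1.symm.trans hpsi2) (hpsi1'.symm.trans hpsi2')
    rw [hp12eq]
  · -- the CSR property
    intro j
    rw [isCSR_iff hsq (blockElems (B' j))]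
    have hval : blockElems (B' j) = ∑ idx : Fin (u * q),
        ((B j (ι idx).1).filter (fun b => e j (ι idx).1 b + (ι idx).2 ≠ 0)).val.map
          (fun b => psiMap g q' b (mlog lg (e j (ι idx).1 b + (ι idx).2))) := by
      unfold blockElems
      exact Finset.sum_congr rfl fun idx _ => newBlock_val _ _ _ _
    have hresmap : (blockElems (B' j)).map (resid (g * q') (s * q'))
        = ∑ idx : Fin (u * q),
          ((B j (ι idx).1).filter (fun b => e j (ι idx).1 b + (ι idx).2 ≠ 0)).val.map
            (fun b => resid (g * q') (s * q')
              (psiMap g q' b (mlog lg (e j (ι idx).1 b + (ι idx).2)))) := by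
      have hmapsum : ∀ (G : Fin (u * q) → Multiset (ZMod (g * q'))),
          Multiset.map (resid (g * q') (s * q')) (∑ idx : Fin (u * q), G idx)
            = ∑ idx : Fin (u * q), Multiset.map (resid (g * q') (s * q')) (G idx) := by
        intro G
        have hh := map_sum (Multiset.mapAddMonoidHom (resid (g * q') (s * q'))) G Finset.univ
        rw [← Multiset.coe_mapAddMonoidHom (resid (g * q') (s * q'))]
        exact hh
      rw [hval, hmapsum]
      refine Finset.sum_congr rfl fun idx _ => ?_
      rw [Multiset.map_map]
      rfl
    apply count_eq_one_of_all
    · -- multiplicity at most one in each coset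
      intro c
      rw [hresmap, count_sum_map]
      rw [Finset.card_le_one]
      rintro ⟨i1, b1⟩ h1 ⟨i2, b2⟩ h2
      simp only [Finset.mem_sigma, Finset.mem_univ, true_and, Finset.mem_filter] at h1 h2
      obtain ⟨⟨hb1, hz1⟩, hc1⟩ := h1
      obtain ⟨⟨hb2, hz2⟩, hc2⟩ := h2
      have hrs : resid g s b1 = resid g s b2 := resid_s_psi hsg (hc1.trans hc2.symm)
      obtain ⟨hk, hbb⟩ := hsrc j (ι i1).1 (ι i2).1 b1 b2 hb1 hb2 hrs
      subst hbb
      rw [← hk] at hc2 hz2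
      have hmeq : mlog lg (e j (ι i1).1 b1 + (ι i1).2)
          = mlog lg (e j (ι i1).1 b1 + (ι i2).2) :=
        m_eq_of_resid hsg hgcd (hc1.trans hc2.symm)
      have hyy : (ι i1).2 = (ι i2).2 :=
        add_left_cancel (hmlog_inj _ _ hz1 hz2 hmeq)
      have hii : i1 = i2 := ι.injective (Prod.ext hk hyy)
      subst hii
      rfl
    · -- total cardinality
      rw [Multiset.card_map, ZMod.card]
      have hbcard : Multiset.card (blockElems (B' j)) = ∑ idx : Fin (u * q), (B' j idx).card := by
        unfold blockElems; simp
      rw [hbcard]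
      have hyfix : ∀ z : F, (Finset.univ.filter (fun y : F => z + y ≠ 0)).card = q' := by
        intro z
        have h2 := Finset.card_filter_add_card_filter_not
          (s := (Finset.univ : Finset F)) (p := fun y : F => z + y ≠ 0)
        have h1 : (Finset.univ.filter (fun y : F => ¬ (z + y ≠ 0))) = {-z} := by
          ext w
          simp only [Finset.mem_filter, Finset.mem_univ, true_and, not_not,
            Finset.mem_singleton]
          constructor
          · intro h; linear_combination h
          · intro h; rw [h]; ring
        rw [h1, Finset.card_singleton, Finset.card_univ, hcard] at h2
        omega
      have hcount1 : ∀ c : ZMod s, Multiset.count c ((blockElems (B j)).map (resid g s)) = 1 :=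
        (isCSR_iff hsg (blockElems (B j))).1 (hCSR j)
      have hsum_s : ∑ k : Fin u, (B j k).card = s := by
        have hbcard2 : Multiset.card (blockElems (B j)) = ∑ k : Fin u, (B j k).card := by
          unfold blockElems; simp
        have h3 : ∑ c : ZMod s, Multiset.count c ((blockElems (B j)).map (resid g s)) = s := by
          rw [Finset.sum_congr rfl (fun c _ => hcount1 c)]
          simp [ZMod.card]
        calc ∑ k : Fin u, (B j k).card
            = Multiset.card (blockElems (B j)) := hbcard2.symm
          _ = Multiset.card ((blockElems (B j)).map (resid g s)) := (Multiset.card_map _ _).symm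
          _ = ∑ c : ZMod s, Multiset.count c ((blockElems (B j)).map (resid g s)) :=
              card_eq_sum_counts _
          _ = s := h3
      calc ∑ idx : Fin (u * q), (B' j idx).card
          = ∑ p : Fin u × F, ((B j p.1).filter (fun b => e j p.1 b + p.2 ≠ 0)).card := by
            rw [← Equiv.sum_comp ι
              (fun p : Fin u × F => ((B j p.1).filter (fun b => e j p.1 b + p.2 ≠ 0)).card)]
            exact Finset.sum_congr rfl fun idx _ => newBlock_card _ _ _ _
        _ = ∑ k : Fin u, ∑ y : F, ((B j k).filter (fun b => e j k b + y ≠ 0)).card :=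
            Fintype.sum_prod_type _
        _ = ∑ k : Fin u, (B j k).card * q' := by
            refine Finset.sum_congr rfl fun k _ => ?_
            calc ∑ y : F, ((B j k).filter (fun b => e j k b + y ≠ 0)).card
                = ∑ y : F, ∑ b ∈ B j k, if e j k b + y ≠ 0 then 1 else 0 := by
                  refine Finset.sum_congr rfl fun y _ => ?_
                  exact Finset.card_filter _ _
              _ = ∑ b ∈ B j k, ∑ y : F, if e j k b + y ≠ 0 then 1 else 0 := Finset.sum_comm
              _ = ∑ b ∈ B j k, q' := by
                  refine Finset.sum_congr rfl fun b _ => ?_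
                  rw [← Finset.card_filter]
                  exact hyfix (e j k b)
              _ = (B j k).card * q' := by rw [Finset.sum_const, smul_eq_mul]
        _ = (∑ k : Fin u, (B j k).card) * q' := by rw [Finset.sum_mul]
        _ = s * q' := by rw [hsum_s]
end

section
/- Let p be a prime and let m be an integer with m > 1. Let q be a prime power with q ≥ p^m and gcd(q−1, p) = 1. If p^m − 3p ≥ 1, then there exists a strictly optimal ((q−1)p(p^m−1), p^{m−1}, p; p^m q)-FHS set; that is, there exists a set S of M = p^{m−1} FHSs of length n = (q−1)p(p^m−1) over an alphabet of size l = p^m q such that H(S;L) ≤ ⌈Lp/n⌉ for every L with 1 ≤ L ≤ n, where p = ⌈(2InM−(I+1)Il)/((nM−1)M)⌉ with I = ⌊nM/l⌋. -/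
/-- Partial Hamming correlation `H_{X,Y}(τ; j | L)` of the frequency hopping
sequences `X, Y : ZMod n → F` for shift `τ`, window start `j` and window length `L`. -/
def partialHC {n : ℕ} {F : Type*} [DecidableEq F] (X Y : ZMod n → F)
    (τ j : ZMod n) (L : ℕ) : ℕ :=
  ∑ t ∈ Finset.range L, if X (j + (t : ZMod n)) = Y (j + (t : ZMod n) + τ) then 1 else 0

/-- The Peng–Fan bound value `⌈(2InM − (I+1)Il) / ((nM−1)M)⌉` where `I = ⌊nM/l⌋`. -/
def pengFanBound (n M l : ℕ) : ℤ :=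
  ⌈(((2 * (n * M / l) * n * M : ℕ) : ℚ) - (((n * M / l + 1) * (n * M / l) * l : ℕ) : ℚ))
    / ((((n * M : ℕ) : ℚ) - 1) * (M : ℚ))⌉

/-- There is a strictly optimal `(n, M, λ; l)`-FHS set (with respect to the Peng–Fan
bound): `λ` equals the Peng–Fan bound value and there are `M` pairwise distinct FHSs of
length `n` over an alphabet of size `l` whose maximum nontrivial partial Hamming
correlation satisfies `H(S; L) ≤ ⌈Lλ/n⌉` for every window length `1 ≤ L ≤ n`. -/
def IsStrictlyOptimalFHSSet (n M lam l : ℕ) : Prop :=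
  (lam : ℤ) = pengFanBound n M l ∧
  ∃ X : Fin M → (ZMod n → Fin l),
    (∀ a b : Fin M, a ≠ b → X a ≠ X b) ∧
    ∀ L : ℕ, 1 ≤ L → L ≤ n →
      (∀ a : Fin M, ∀ τ : ZMod n, τ ≠ 0 → ∀ j : ZMod n,
        (partialHC (X a) (X a) τ j L : ℤ) ≤ ⌈((L * lam : ℕ) : ℚ) / (n : ℚ)⌉) ∧
      (∀ a b : Fin M, a ≠ b → ∀ τ j : ZMod n,
        (partialHC (X a) (X b) τ j L : ℤ) ≤ ⌈((L * lam : ℕ) : ℚ) / (n : ℚ)⌉)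

/-!
Take finite fields `K₁` of order `P = p ^ m` and `K₂` of order `q`, elements `α ∈ K₁` and
`β ∈ K₂` of orders `A = P - 1` and `Q = q - 1`, and representatives `e_a` of the `P / p` cosets
of the prime field in `K₁`. The `a`-th sequence is
`x ↦ (α ^ x + e_a + x, β ^ ⌊x / A⌋ + β ^ (x % A))`, of period `n = A Q p`. A collision `y_a x = y_b (x + s)` gives `α ^ x (1 - α ^ s) = e_b - e_a + s`
in the first coordinate. If `A ∣ s` this forces `a = b` and `p ∣ s`, after which the second
coordinate forces `A Q ∣ s`: the shift is trivial. Otherwise `α ^ x`, and then `β ^ ⌊x / A⌋`,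
are determined by `s`, so all collisions lie in one residue class mod `A Q` and a window of
length `L` meets at most `⌈L / (A Q)⌉ = ⌈L p / n⌉` of them. That the Peng–Fan value is `p`
is a direct computation using `P ≥ 3p + 1` and `q ≥ P`.
-/

open Finset Function

theorem card_le_ceil_div_of_modEq {s : Finset ℕ} {L D : ℕ} (hD : 0 < D) (hs : s ⊆ range L)
    (hmod : ∀ x ∈ s, ∀ y ∈ s, x ≡ y [MOD D]) : (#s : ℤ) ≤ ⌈(L : ℚ) / D⌉ := by
  obtain rfl | ⟨x₀, hx₀⟩ := s.eq_empty_or_nonempty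
  · simp only [card_empty, Nat.cast_zero]
    exact Int.ceil_nonneg (by positivity)
  have hsub : s ⊆ {x ∈ range L | x ≡ x₀ [MOD D]} :=
    fun x hx ↦ mem_filter.2 ⟨hs hx, hmod x hx x₀ hx₀⟩
  calc (#s : ℤ) ≤ #{x ∈ range L | x ≡ x₀ [MOD D]} := by exact_mod_cast card_le_card hsub
    _ = ⌈(L - (x₀ % D : ℕ)) / (D : ℚ)⌉ := by
      rw [← Nat.count_eq_card_filter_range, Nat.count_modEq_card_eq_ceil L hD]
    _ ≤ ⌈(L : ℚ) / D⌉ := by gcongr; simp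

theorem Function.Periodic.comp_zmod_val {α : Type*} {N : ℕ} [NeZero N] {y : ℕ → α}
    (hy : Periodic y N) (x : ℕ) : y ((x : ZMod N).val) = y x := by
  rw [ZMod.val_natCast, hy.map_mod_nat]

theorem partialHC_comp_val_le {α : Type*} [DecidableEq α] {N D : ℕ} [NeZero N] {y z : ℕ → α}
    (hy : Periodic y N) (hz : Periodic z N) (hD : 0 < D) (τ j : ZMod N) (L : ℕ)
    (hits : ∀ x x', y x = z (x + τ.val) → y x' = z (x' + τ.val) → x ≡ x' [MOD D]) :
    (partialHC (fun t ↦ y t.val) (fun t ↦ z t.val) τ j L : ℤ) ≤ ⌈(L : ℚ) / D⌉ := by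
  have hcast (t : ℕ) : j + (t : ZMod N) = ((j.val + t : ℕ) : ZMod N) := by
    push_cast; rw [ZMod.natCast_zmod_val]
  have hcast' (x : ℕ) : (x : ZMod N) + τ = ((x + τ.val : ℕ) : ZMod N) := by
    push_cast; rw [ZMod.natCast_zmod_val]
  have hHC : partialHC (fun t ↦ y t.val) (fun t ↦ z t.val) τ j L =
      #{t ∈ range L | y (j.val + t) = z (j.val + t + τ.val)} := by
    simp only [partialHC, hcast, hcast', hy.comp_zmod_val, hz.comp_zmod_val, sum_boole, Nat.cast_id]
  rw [hHC]
  refine card_le_ceil_div_of_modEq hD (filter_subset _ _) fun t ht t' ht' ↦ ?_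
  exact Nat.ModEq.add_left_cancel' j.val (hits _ _ (mem_filter.1 ht).2 (mem_filter.1 ht').2)

section FrequencyHopping

variable {K₁ K₂ : Type*} [Field K₁] [Field K₂] {g₁ : K₁} {g₂ : K₂} {A Q : ℕ}

def fhsSeq (g₁ : K₁) (g₂ : K₂) (A : ℕ) (e : K₁) (x : ℕ) : K₁ × K₂ :=
  (g₁ ^ x + e + x, g₂ ^ (x / A) + g₂ ^ (x % A))

theorem fhsSeq_periodic (p : ℕ) [CharP K₁ p] (hg₁ : orderOf g₁ = A) (hg₂ : orderOf g₂ = Q)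
    (e : K₁) : Periodic (fhsSeq g₁ g₂ A e) (A * Q * p) := by
  intro x
  rcases Nat.eq_zero_or_pos A with rfl | hA
  · simp
  have h₁ : g₁ ^ (A * Q * p) = 1 := by
    rw [mul_assoc, pow_mul, ← hg₁, pow_orderOf_eq_one, one_pow]
  have h₂ : g₂ ^ (Q * p) = 1 := by rw [pow_mul, ← hg₂, pow_orderOf_eq_one, one_pow]
  have hp : ((A * Q * p : ℕ) : K₁) = 0 := (CharP.cast_eq_zero_iff K₁ p _).2 (dvd_mul_left _ _)
  simp only [fhsSeq, Prod.mk.injEq]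
  constructor
  · rw [pow_add, h₁, mul_one, Nat.cast_add, hp, add_zero]
  · rw [mul_assoc, Nat.add_mul_div_left _ _ hA, Nat.add_mul_mod_self_left, pow_add, h₂, mul_one]

theorem fhsSeq_hit_fst {e e' : K₁} {x s : ℕ}
    (h : fhsSeq g₁ g₂ A e x = fhsSeq g₁ g₂ A e' (x + s)) :
    g₁ ^ x * (1 - g₁ ^ s) = e' - e + s := by
  have h₁ := congrArg Prod.fst h
  simp only [fhsSeq, pow_add, Nat.cast_add] at h₁
  linear_combination h₁

theorem fhsSeq_hit_snd (hA : 0 < A) {e e' : K₁} {x s : ℕ}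
    (h : fhsSeq g₁ g₂ A e x = fhsSeq g₁ g₂ A e' (x + s)) :
    g₂ ^ (x / A) * (1 - g₂ ^ ((x % A + s) / A)) = g₂ ^ ((x % A + s) % A) - g₂ ^ (x % A) := by
  have hdiv : (x + s) / A = x / A + (x % A + s) / A := by
    conv_lhs => rw [← Nat.div_add_mod x A, add_assoc]
    rw [Nat.mul_add_div hA]
  have hmod : (x + s) % A = (x % A + s) % A := (Nat.mod_add_mod x A s).symm
  have h₂ := congrArg Prod.snd h
  simp only [fhsSeq, hdiv, hmod, pow_add] at h₂
  linear_combination h₂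

variable {ι : Type*} {e : ι → K₁}

theorem eq_and_dvd_of_fhsSeq_hit (p : ℕ) [CharP K₁ p] (hA : 0 < A) (hQ : 0 < Q)
    (hg₁ : orderOf g₁ = A) (hg₂ : orderOf g₂ = Q)
    (he : ∀ a b, e a - e b ∈ AddSubgroup.zmultiples (1 : K₁) → a = b) {a b : ι} {x s : ℕ}
    (hs : A ∣ s) (h : fhsSeq g₁ g₂ A (e a) x = fhsSeq g₁ g₂ A (e b) (x + s)) :
    a = b ∧ p ∣ s ∧ A * Q ∣ s := by
  have h₁ := fhsSeq_hit_fst h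
  have hgs : g₁ ^ s = 1 := orderOf_dvd_iff_pow_eq_one.1 (by rwa [hg₁])
  rw [hgs, sub_self, mul_zero] at h₁
  obtain rfl : a = b := he a b <| by
    rw [show e a - e b = s by linear_combination h₁]
    simpa using AddSubgroup.intCast_mem_zmultiples_one (R := K₁) s
  have h₂ := fhsSeq_hit_snd hA h
  obtain ⟨k, rfl⟩ := hs
  rw [Nat.add_mul_div_left _ _ hA, Nat.div_eq_of_lt (Nat.mod_lt _ hA), zero_add,
    Nat.add_mul_mod_self_left, Nat.mod_mod, sub_self, mul_eq_zero] at h₂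
  have hg₂0 : g₂ ≠ 0 := (orderOf_pos_iff.1 (hg₂ ▸ hQ)).isUnit.ne_zero
  have hk : g₂ ^ k = 1 := by
    rcases h₂ with h₂ | h₂
    · exact absurd (pow_eq_zero_iff'.1 h₂).1 hg₂0
    · exact (sub_eq_zero.1 h₂).symm
  refine ⟨rfl, (CharP.cast_eq_zero_iff K₁ p _).1 (by linear_combination -h₁), ?_⟩
  exact mul_dvd_mul_left A (hg₂ ▸ orderOf_dvd_of_pow_eq_one hk)

theorem modEq_of_fhsSeq_hits (hA : 0 < A) (hAQ : A ≤ Q) (hg₁ : orderOf g₁ = A)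
    (hg₂ : orderOf g₂ = Q) {e e' : K₁} {x x' s : ℕ} (hs : ¬ A ∣ s)
    (h : fhsSeq g₁ g₂ A e x = fhsSeq g₁ g₂ A e' (x + s))
    (h' : fhsSeq g₁ g₂ A e x' = fhsSeq g₁ g₂ A e' (x' + s)) : x ≡ x' [MOD A * Q] := by
  have hfin₁ : IsOfFinOrder g₁ := orderOf_pos_iff.1 (hg₁ ▸ hA)
  have hfin₂ : IsOfFinOrder g₂ := orderOf_pos_iff.1 (hg₂ ▸ hA.trans_le hAQ)
  have hgs : 1 - g₁ ^ s ≠ 0 :=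
    sub_ne_zero.2 fun h₀ ↦ hs (hg₁ ▸ orderOf_dvd_of_pow_eq_one h₀.symm)
  have hr : x % A = x' % A := by
    change x ≡ x' [MOD A]
    rw [← hg₁, ← hfin₁.pow_eq_pow_iff_modEq]
    exact mul_right_cancel₀ hgs ((fhsSeq_hit_fst h).trans (fhsSeq_hit_fst h').symm)
  have h₂ := fhsSeq_hit_snd hA h
  have h₂' := fhsSeq_hit_snd hA h'
  rw [← hr] at h₂'
  have hne : g₂ ^ ((x % A + s) % A) - g₂ ^ (x % A) ≠ 0 := by
    rw [sub_ne_zero, Ne, hfin₂.pow_eq_pow_iff_modEq, hg₂]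
    intro hmod
    have hlt (y : ℕ) : y % A < Q := (Nat.mod_lt _ hA).trans_le hAQ
    have : x % A + s ≡ x % A + 0 [MOD A] := by
      rw [add_zero, Nat.ModEq, hmod.eq_of_lt_of_lt (hlt _) (hlt _), Nat.mod_mod]
    exact hs (Nat.modEq_zero_iff_dvd.1 (Nat.ModEq.add_left_cancel' _ this))
  have hc : 1 - g₂ ^ ((x % A + s) / A) ≠ 0 := fun h₀ ↦ hne (by rw [← h₂, h₀, mul_zero])
  have hq : x / A % Q = x' / A % Q := by
    change x / A ≡ x' / A [MOD Q]
    rw [← hg₂, ← hfin₂.pow_eq_pow_iff_modEq]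
    exact mul_right_cancel₀ hc (h₂.trans h₂'.symm)
  rw [Nat.ModEq, Nat.mod_mul, Nat.mod_mul, hr, hq]

theorem modEq_of_fhsSeq_hits_of_nontrivial (p : ℕ) [CharP K₁ p] (hA : 0 < A) (hAQ : A ≤ Q)
    (hg₁ : orderOf g₁ = A) (hg₂ : orderOf g₂ = Q)
    (he : ∀ a b, e a - e b ∈ AddSubgroup.zmultiples (1 : K₁) → a = b)
    (hcop : Nat.Coprime (A * Q) p) {a b : ι} {s : ℕ} (hnt : ¬ (a = b ∧ A * Q * p ∣ s))
    {x x' : ℕ} (h : fhsSeq g₁ g₂ A (e a) x = fhsSeq g₁ g₂ A (e b) (x + s))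
    (h' : fhsSeq g₁ g₂ A (e a) x' = fhsSeq g₁ g₂ A (e b) (x' + s)) : x ≡ x' [MOD A * Q] := by
  by_cases hs : A ∣ s
  · obtain ⟨rfl, hp, hAQs⟩ :=
      eq_and_dvd_of_fhsSeq_hit p hA (hA.trans_le hAQ) hg₁ hg₂ he hs h
    exact absurd ⟨rfl, hcop.mul_dvd_of_dvd_of_dvd hAQs hp⟩ hnt
  · exact modEq_of_fhsSeq_hits hA hAQ hg₁ hg₂ hs h h'

end FrequencyHopping

theorem Nat.sub_one_mul_sub_one_mul_div_eq {P q : ℕ} (hP : 2 ≤ P) (hPq : P ≤ q) :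
    (q - 1) * (P - 1) * P / (P * q) = P - 2 := by
  apply Nat.div_eq_of_lt_le <;> zify [hP, (by omega : 1 ≤ P), (by omega : 1 ≤ q)] <;> nlinarith

theorem pengFanBound_eq {p P q M : ℕ} (hM : M * p = P) (hPq : P ≤ q) (hcond : 3 * p + 1 ≤ P) :
    pengFanBound ((q - 1) * p * (P - 1)) M (P * q) = p := by
  obtain rfl | hp := Nat.eq_zero_or_pos p
  · omega
  have hM0 : 0 < M := Nat.pos_of_ne_zero (by rintro rfl; omega)
  have hnM : (q - 1) * p * (P - 1) * M = (q - 1) * (P - 1) * P := by rw [← hM]; ring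
  rw [pengFanBound, hnM, Nat.sub_one_mul_sub_one_mul_div_eq (by omega) hPq, Int.ceil_eq_iff]
  have hMq : (M : ℚ) * p = P := by exact_mod_cast hM
  have hpq : (1 : ℚ) ≤ p := by exact_mod_cast hp
  have hPq' : (P : ℚ) ≤ q := by exact_mod_cast hPq
  have hcond' : 3 * (p : ℚ) + 1 ≤ P := by exact_mod_cast hcond
  push_cast [Nat.cast_sub (by omega : 2 ≤ P), Nat.cast_sub (by omega : 1 ≤ P),
    Nat.cast_sub (by omega : 1 ≤ q)]
  have hnum : 2 * ((P : ℚ) - 2) * ((q - 1) * p * (P - 1)) * M - (P - 2 + 1) * (P - 2) * (P * q)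
      = M * (p * ((P - 1) * (P - 2) * (q - 2))) := by rw [← hMq]; ring
  have hden : (0 : ℚ) < (q - 1) * (P - 1) * P - 1 := by
    have : (3 : ℚ) * 3 ≤ (q - 1) * (P - 1) := by nlinarith
    nlinarith
  rw [hnum, mul_comm _ (M : ℚ), mul_div_mul_left _ _ (by positivity), lt_div_iff₀ hden,
    div_le_iff₀ hden]
  have hlower :
      ((p : ℚ) - 1) * ((q - 1) * (P - 1) * P - 1) < p * ((P - 1) * (P - 2) * (q - 2)) := by
    have h : (0 : ℚ) < q * (P - 2 * p) - P * (p + 1) + 4 * p := by nlinarith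
    have key : (p : ℚ) * ((P - 1) * (P - 2) * (q - 2)) - (p - 1) * ((q - 1) * (P - 1) * P - 1)
        = (P - 1) * (q * (P - 2 * p) - P * (p + 1) + 4 * p) + (p - 1) := by ring
    nlinarith
  have hupper : ((P : ℚ) - 1) * (P - 2) * (q - 2) ≤ (q - 1) * (P - 1) * P - 1 := by nlinarith
  exact ⟨hlower, by gcongr⟩

theorem AddSubgroup.exists_fin_sub_mem_imp_eq {G : Type*} [AddCommGroup G] (H : AddSubgroup G)
    [Finite (G ⧸ H)] : ∃ e : Fin (Nat.card (G ⧸ H)) → G, ∀ a b, e a - e b ∈ H → a = b := by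
  set φ := (Finite.equivFin (G ⧸ H)).symm
  refine ⟨fun a ↦ (φ a).out, fun a b hab ↦ φ.injective ?_⟩
  rw [← QuotientAddGroup.out_eq' (φ a), ← QuotientAddGroup.out_eq' (φ b)]
  exact QuotientAddGroup.eq_iff_sub_mem.2 hab

theorem Nat.card_quotient_zmultiples_one_mul (R : Type*) [Ring R] (p : ℕ) [CharP R p] :
    Nat.card (R ⧸ AddSubgroup.zmultiples (1 : R)) * p = Nat.card R := by
  rw [AddSubgroup.card_eq_card_quotient_mul_card_addSubgroup (AddSubgroup.zmultiples (1 : R)),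
    Nat.card_zmultiples, CharP.eq R (CharP.addOrderOf_one R) ‹_›]

theorem FiniteField.exists_orderOf_eq_card_sub_one (K : Type*) [Field K] [Finite K] :
    ∃ g : K, orderOf g = Nat.card K - 1 := by
  obtain ⟨g, hg⟩ := IsCyclic.exists_ofOrder_eq_natCard (α := Kˣ)
  exact ⟨g, by rw [orderOf_units, hg, Nat.card_units]⟩

theorem exists_fhs_family (K₁ K₂ : Type*) [Field K₁] [Finite K₁] [Field K₂] [Finite K₂]
    (p : ℕ) [CharP K₁ p] {P q M : ℕ} (h₁ : Nat.card K₁ = P) (h₂ : Nat.card K₂ = q)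
    (hPq : P ≤ q) (hM : M * p = P) (hcop : Nat.Coprime ((P - 1) * (q - 1)) p) :
    ∃ X : Fin M → ZMod ((q - 1) * p * (P - 1)) → Fin (P * q), Injective X ∧
      ∀ a b τ j L, (a ≠ b ∨ τ ≠ 0) →
        (partialHC (X a) (X b) τ j L : ℤ) ≤ ⌈((L * p : ℕ) : ℚ) / ((q - 1) * p * (P - 1) : ℕ)⌉ := by
  have hP : 1 < P := h₁ ▸ Finite.one_lt_card
  have hp : p ≠ 0 := CharP.char_ne_zero_of_finite K₁ p
  obtain ⟨g₁, hg₁⟩ := FiniteField.exists_orderOf_eq_card_sub_one K₁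
  obtain ⟨g₂, hg₂⟩ := FiniteField.exists_orderOf_eq_card_sub_one K₂
  rw [h₁] at hg₁
  rw [h₂] at hg₂
  obtain ⟨e, he⟩ := AddSubgroup.exists_fin_sub_mem_imp_eq (AddSubgroup.zmultiples (1 : K₁))
  obtain rfl : Nat.card (K₁ ⧸ AddSubgroup.zmultiples (1 : K₁)) = M := Nat.eq_of_mul_eq_mul_right
    (Nat.pos_of_ne_zero hp) (by rw [Nat.card_quotient_zmultiples_one_mul, h₁, hM])
  have hA : 0 < P - 1 := by omega
  have hAQ : P - 1 ≤ q - 1 := by omega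
  rw [show (q - 1) * p * (P - 1) = (P - 1) * (q - 1) * p by ring]
  have hD : 0 < (P - 1) * (q - 1) := Nat.mul_pos hA (hA.trans_le hAQ)
  have : NeZero ((P - 1) * (q - 1) * p) := ⟨(Nat.mul_pos hD (Nat.pos_of_ne_zero hp)).ne'⟩
  let Φ : K₁ × K₂ ≃ Fin (P * q) :=
    (Finite.equivFin _).trans (finCongr (by rw [Nat.card_prod, h₁, h₂]))
  refine ⟨fun a t ↦ Φ (fhsSeq g₁ g₂ (P - 1) (e a) t.val), fun a b hab ↦ ?_, ?_⟩
  · have h₀ : fhsSeq g₁ g₂ (P - 1) (e a) 0 = fhsSeq g₁ g₂ (P - 1) (e b) (0 + 0) :=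
      Φ.injective (by simpa using congrFun hab 0)
    exact (eq_and_dvd_of_fhsSeq_hit p hA (hA.trans_le hAQ) hg₁ hg₂ he (dvd_zero _) h₀).1
  intro a b τ j L hnt
  have hper (c) := (fhsSeq_periodic p hg₁ hg₂ (e c)).comp Φ
  have hnt' : ¬ (a = b ∧ (P - 1) * (q - 1) * p ∣ τ.val) := by
    rintro ⟨rfl, hdvd⟩
    exact hnt.resolve_left (not_not.2 rfl)
      ((ZMod.val_eq_zero τ).1 (Nat.eq_zero_of_dvd_of_lt hdvd (ZMod.val_lt τ)))
  calc (partialHC _ _ τ j L : ℤ) ≤ ⌈(L : ℚ) / ((P - 1) * (q - 1) : ℕ)⌉ :=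
        partialHC_comp_val_le (hper a) (hper b) hD τ j L fun x x' h h' ↦
          modEq_of_fhsSeq_hits_of_nontrivial p hA hAQ hg₁ hg₂ he hcop hnt'
            (Φ.injective h) (Φ.injective h')
    _ = ⌈((L * p : ℕ) : ℚ) / ((P - 1) * (q - 1) * p : ℕ)⌉ := by
        push_cast
        rw [mul_div_mul_right _ _ (by exact_mod_cast hp)]

theorem stmt19_general (p m q : ℕ) (hp : p.Prime) (hq : IsPrimePow q)
    (hqp : p ^ m ≤ q) (hgcd : Nat.gcd (q - 1) p = 1) (hcond : 3 * p + 1 ≤ p ^ m) :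
    IsStrictlyOptimalFHSSet ((q - 1) * p * (p ^ m - 1)) (p ^ (m - 1)) p (p ^ m * q) := by
  obtain ⟨r, k, hr, hk, rfl⟩ := hq
  have hm : m ≠ 0 := by rintro rfl; simp [hp.ne_zero] at hcond
  have := Fact.mk hp
  have := Fact.mk hr.nat_prime
  have hM : p ^ (m - 1) * p = p ^ m := by rw [← pow_succ, Nat.sub_add_cancel (by omega)]
  have hcop : Nat.Coprime ((p ^ m - 1) * (r ^ k - 1)) p := by
    have h : Nat.Coprime (p ^ m - 1) (p ^ m) :=
      (Nat.coprime_self_sub_left (Nat.one_le_pow _ _ hp.pos)).2 (Nat.coprime_one_left _)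
    exact (h.coprime_dvd_right (dvd_pow_self p hm)).mul_left hgcd
  obtain ⟨X, hX, hbound⟩ := exists_fhs_family (GaloisField p m) (GaloisField r k) p
    (GaloisField.card p m (by omega)) (GaloisField.card r k hk.ne') hqp hM hcop
  refine ⟨(pengFanBound_eq hM hqp hcond).symm, X, fun a b hab ↦ hX.ne hab, fun L _ _ ↦
    ⟨fun a τ hτ j ↦ hbound a a τ j L (.inr hτ), fun a b hab τ j ↦ hbound a b τ j L (.inl hab)⟩⟩

theorem stmt19 (p m q : ℕ) (hp : p.Prime) (hm : 1 < m) (hq : IsPrimePow q)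
    (hqp : p ^ m ≤ q) (hgcd : Nat.gcd (q - 1) p = 1) (hcond : 3 * p + 1 ≤ p ^ m) :
    IsStrictlyOptimalFHSSet ((q - 1) * p * (p ^ m - 1)) (p ^ (m - 1)) p (p ^ m * q) :=
  stmt19_general p m q hp hq hqp hgcd hcond
end
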